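/- arXiv:1012.5320 — 4 statements merged into one kernel-verified Lean document; each statement's English description precedes it below -/
import Mathlib

section
/- Let χ be a nontrivial multiplicative character of F_{2^s} with χ(0) = 0. Then Σ_{x ∈ F_{2^s}} χ(x) χ(x+1) equals the Gauss sum G(χ) = Σ_{y ∈ F_{2^s}} χ(y) (-1)^{Tr(y)}. -/
open Finset Polynomial

/-- Absolute trace of `F_{2^s}` to `F_2`: `Tr(x) = x + x^2 + ... + x^(2^(s-1))`. -/
def fieldTrace {F : Type*} [Field F] (s : ℕ) (x : F) : F :=
  ∑ i ∈ Finset.range s, x ^ (2 ^ i)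

section Aux

variable {F : Type*} [Field F] [Fintype F] {s : ℕ}

omit [Fintype F] in
lemma aux_s_pos [Fintype F] (hcard : Fintype.card F = 2 ^ s) : 0 < s := by
  apply Nat.pos_of_ne_zero
  intro h
  subst h
  simp only [pow_zero] at hcard
  have := Fintype.one_lt_card (α := F)
  omega

lemma aux_char2 (hcard : Fintype.card F = 2 ^ s) : CharP F 2 := by
  set p := ringChar F with hp
  haveI : CharP F p := ringChar.charP F
  have hprime : Nat.Prime p := CharP.char_is_prime F p
  obtain ⟨n, -, hc⟩ := FiniteField.card F p
  have hdvd : p ∣ 2 ^ s := by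
    rw [← hcard, hc]
    exact dvd_pow_self p n.pos.ne'
  have hp2 : p = 2 :=
    (Nat.prime_dvd_prime_iff_eq hprime Nat.prime_two).mp (hprime.dvd_of_dvd_pow hdvd)
  rw [← hp2]; exact ringChar.charP F

lemma aux_tr_add (h2 : CharP F 2) (a b : F) :
    fieldTrace s (a + b) = fieldTrace s a + fieldTrace s b := by
  haveI := h2
  haveI : Fact (Nat.Prime 2) := ⟨Nat.prime_two⟩
  unfold fieldTrace
  rw [← Finset.sum_add_distrib]
  exact Finset.sum_congr rfl fun i _ => add_pow_char_pow a b 2 i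

lemma aux_tr_sq (h2 : CharP F 2) (hcard : Fintype.card F = 2 ^ s) (x : F) :
    fieldTrace s (x ^ 2) = fieldTrace s x := by
  haveI := h2
  have key : ∀ i, (x ^ 2) ^ (2 ^ i) = x ^ (2 ^ (i + 1)) := by
    intro i; rw [← pow_mul, pow_succ, mul_comm (2^i) 2]
  unfold fieldTrace
  have h1 : ∑ i ∈ range (s + 1), x ^ (2 ^ i)
      = ∑ i ∈ range s, x ^ (2 ^ (i + 1)) + x ^ (2 ^ 0) := Finset.sum_range_succ' _ _
  have h2' : ∑ i ∈ range (s + 1), x ^ (2 ^ i)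
      = ∑ i ∈ range s, x ^ (2 ^ i) + x ^ (2 ^ s) := Finset.sum_range_succ _ _
  have hxs : x ^ (2 ^ s) = x := by rw [← hcard]; exact FiniteField.pow_card x
  simp only [key]
  rw [h1] at h2'
  simp only [pow_zero, pow_one, hxs] at h2'
  linear_combination h2'

lemma aux_tr_vals (h2 : CharP F 2) (hcard : Fintype.card F = 2 ^ s) (x : F) :
    fieldTrace s x = 0 ∨ fieldTrace s x = 1 := by
  haveI := h2
  have hsq : (fieldTrace s x) ^ 2 = fieldTrace s x := by
    have h : (fieldTrace s x) ^ 2 = fieldTrace s (x ^ 2) := by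
      unfold fieldTrace
      rw [CharTwo.sum_sq]
      exact Finset.sum_congr rfl fun i _ => by rw [← pow_mul, ← pow_mul, mul_comm]
    rw [h, aux_tr_sq h2 hcard]
  have h : fieldTrace s x * (fieldTrace s x - 1) = 0 := by linear_combination hsq
  rcases mul_eq_zero.mp h with h | h
  · exact Or.inl h
  · exact Or.inr (sub_eq_zero.mp h)

lemma aux_tr_AS (h2 : CharP F 2) (hcard : Fintype.card F = 2 ^ s) (x : F) :
    fieldTrace s (x ^ 2 + x) = 0 := by
  haveI := h2
  rw [aux_tr_add h2, aux_tr_sq h2 hcard, CharTwo.add_self_eq_zero]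

lemma aux_tr_exists (h2 : CharP F 2) (hcard : Fintype.card F = 2 ^ s) :
    ∃ x : F, fieldTrace s x ≠ 0 := by
  haveI := h2
  have hs : 0 < s := aux_s_pos hcard
  by_contra hall
  push_neg at hall
  set p : F[X] := ∑ i ∈ range s, X ^ (2 ^ i) with hp
  have heval : ∀ x : F, p.eval x = fieldTrace s x := by
    intro x; simp [hp, fieldTrace, eval_finset_sum]
  have hdeg : p.natDegree < Fintype.card F := by
    have hle : p.natDegree ≤ 2 ^ (s - 1) := by
      apply natDegree_sum_le_of_forall_le
      intro i hi
      rw [natDegree_X_pow]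
      have := Finset.mem_range.mp hi
      exact Nat.pow_le_pow_right (by norm_num) (by omega)
    calc p.natDegree ≤ 2 ^ (s - 1) := hle
      _ < 2 ^ s := Nat.pow_lt_pow_right (by norm_num) (by omega)
      _ = Fintype.card F := hcard.symm
  have hzero : p = 0 := by
    apply eq_zero_of_natDegree_lt_card_of_eval_eq_zero' p Finset.univ
    · intro i _; rw [heval]; exact hall i
    · simpa using hdeg
  have hcoeff : p.coeff 1 = 1 := by
    rw [hp, finset_sum_coeff]
    simp only [coeff_X_pow]
    rw [Finset.sum_eq_single 0]
    · simp
    · intro i hi hne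
      have h1 : 1 < 2 ^ i := Nat.one_lt_two_pow hne
      have : ¬ (1 = 2 ^ i) := by omega
      simp [this]
    · intro h; exact absurd (Finset.mem_range.mpr hs) h
  rw [hzero] at hcoeff
  simp at hcoeff

end Aux

theorem sum_char_shift_eq_gauss_sum {F : Type*} [Field F] [Fintype F] [DecidableEq F]
    (s : ℕ) (hcard : Fintype.card F = 2 ^ s) (χ : MulChar F ℂ) (hχ : χ ≠ 1) :
    ∑ x : F, χ x * χ (x + 1)
      = ∑ y : F, χ y * (if fieldTrace s y = 0 then (1 : ℂ) else -1) := by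
  haveI h2 : CharP F 2 := aux_char2 hcard
  have hc2 : (2 : F) = 0 := by exact_mod_cast CharP.cast_eq_zero F 2
  set T : Finset F := Finset.univ.filter (fun y => fieldTrace s y = 0) with hT
  -- cardinality of T
  obtain ⟨x₁, hx₁⟩ := aux_tr_exists h2 hcard
  have hx₁1 : fieldTrace s x₁ = 1 := (aux_tr_vals h2 hcard x₁).resolve_left hx₁
  have hcardT : 2 * T.card = 2 ^ s := by
    have hbij : T.card = (Finset.univ.filter (fun y : F => ¬ fieldTrace s y = 0)).card := by
      apply Finset.card_nbij' (fun y => y + x₁) (fun y => y + x₁)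
      · intro y hy
        simp only [hT, Finset.mem_coe, Finset.mem_filter, Finset.mem_univ, true_and] at hy ⊢
        rw [aux_tr_add h2, hy, hx₁1, zero_add]
        exact one_ne_zero
      · intro y hy
        simp only [hT, Finset.mem_coe, Finset.mem_filter, Finset.mem_univ, true_and] at hy ⊢
        rcases aux_tr_vals h2 hcard y with h0 | h1
        · exact absurd h0 hy
        · rw [aux_tr_add h2, h1, hx₁1, CharTwo.add_self_eq_zero]
      · intro y _; beta_reduce; rw [add_assoc, CharTwo.add_self_eq_zero, add_zero]
      · intro y _; beta_reduce; rw [add_assoc, CharTwo.add_self_eq_zero, add_zero]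
    have hsplit := Finset.card_filter_add_card_filter_not
      (s := (Finset.univ : Finset F)) (fun y => fieldTrace s y = 0)
    rw [Finset.card_univ, hcard] at hsplit
    rw [hT] at hbij ⊢
    omega
  -- image of Artin-Schreier map
  set A : F → F := fun x => x ^ 2 + x with hA
  have hfiber : ∀ y ∈ Finset.univ.image A, (Finset.univ.filter (fun x => A x = y)).card = 2 := by
    intro y hy
    obtain ⟨x₀, -, hx₀⟩ := Finset.mem_image.mp hy
    have hset : Finset.univ.filter (fun x => A x = y) = {x₀, x₀ + 1} := by
      ext x
      simp only [Finset.mem_filter, Finset.mem_univ, true_and, Finset.mem_insert,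
        Finset.mem_singleton]
      constructor
      · intro h
        rw [← hx₀] at h
        simp only [hA] at h
        have key : (x + x₀) * (x + x₀ + 1) = 0 := by
          linear_combination h + (x₀ ^ 2 + x * x₀ + x₀) * hc2
        rcases mul_eq_zero.mp key with h' | h'
        · left; linear_combination h' - x₀ * hc2
        · right; linear_combination h' - (x₀ + 1) * hc2
      · rintro (rfl | rfl)
        · exact hx₀
        · rw [← hx₀]
          simp only [hA]
          linear_combination (x₀ + 1) * hc2
    rw [hset, Finset.card_insert_of_notMem, Finset.card_singleton]
    simp only [Finset.mem_singleton]
    intro h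
    exact one_ne_zero (α := F) (by linear_combination -h)
  have himsub : Finset.univ.image A ⊆ T := by
    intro y hy
    obtain ⟨x₀, -, hx₀⟩ := Finset.mem_image.mp hy
    rw [hT, Finset.mem_filter]
    exact ⟨Finset.mem_univ y, hx₀ ▸ aux_tr_AS h2 hcard x₀⟩
  have himcard : 2 * (Finset.univ.image A).card = 2 ^ s := by
    have hcnt := Finset.card_eq_sum_card_image A (Finset.univ : Finset F)
    rw [Finset.card_univ, hcard] at hcnt
    rw [hcnt, Finset.sum_congr rfl hfiber, Finset.sum_const, smul_eq_mul]
    ring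
  have himeq : Finset.univ.image A = T := by
    apply Finset.eq_of_subset_of_card_le himsub
    omega
  -- LHS computation
  have hLHS : ∑ x : F, χ x * χ (x + 1) = 2 * ∑ y ∈ T, χ y := by
    have h1 : ∀ x : F, χ x * χ (x + 1) = χ (A x) := by
      intro x
      rw [← map_mul]
      congr 1
      simp only [hA]; ring
    rw [Finset.sum_congr rfl (fun x _ => h1 x), Finset.sum_comp χ A, himeq]
    have h3 : ∀ y ∈ T, (Finset.univ.filter (fun x => A x = y)).card • χ y = 2 * χ y := by
      intro y hy
      rw [hfiber y (himeq ▸ hy)]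
      push_cast [smul_eq_mul]
      ring
    rw [Finset.sum_congr rfl h3, ← Finset.mul_sum]
  -- RHS computation
  have hsum0 : ∑ y ∈ T, χ y + ∑ y ∈ Finset.univ.filter (fun y => ¬ fieldTrace s y = 0), χ y
      = 0 := by
    rw [hT, Finset.sum_filter_add_sum_filter_not]
    exact MulChar.sum_eq_zero_of_ne_one hχ
  have hRHS : ∑ y : F, χ y * (if fieldTrace s y = 0 then (1 : ℂ) else -1)
      = 2 * ∑ y ∈ T, χ y := by
    rw [← Finset.sum_filter_add_sum_filter_not Finset.univ (fun y => fieldTrace s y = 0)]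
    have e1 : ∑ y ∈ Finset.univ.filter (fun y => fieldTrace s y = 0),
        χ y * (if fieldTrace s y = 0 then (1 : ℂ) else -1) = ∑ y ∈ T, χ y := by
      apply Finset.sum_congr hT.symm
      intro y hy
      rw [Finset.mem_filter] at hy
      rw [if_pos hy.2, mul_one]
    have e2 : ∑ y ∈ Finset.univ.filter (fun y => ¬ fieldTrace s y = 0),
        χ y * (if fieldTrace s y = 0 then (1 : ℂ) else -1)
        = -∑ y ∈ Finset.univ.filter (fun y => ¬ fieldTrace s y = 0), χ y := by
      rw [← Finset.sum_neg_distrib]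
      apply Finset.sum_congr rfl
      intro y hy
      rw [Finset.mem_filter] at hy
      rw [if_neg hy.2]; ring
    rw [e1, e2]
    have e3 : ∑ y ∈ Finset.univ.filter (fun y => ¬ fieldTrace s y = 0), χ y
        = -∑ y ∈ T, χ y := by linear_combination hsum0
    rw [e3]; ring
  rw [hLHS, hRHS]
end

section
/- Let m be odd, F_{2^{2m}} = F_{2^m}(α) with α^2 + α + 1 = 0, and χ a multiplicative character of F_{2^{2m}} of order 3 (with χ(0)=0). Then Σ_{z ∈ F_{2^m}} χ(z + α) = -1. -/
theorem sum_cubic_char_shift_alpha {F : Type*} [Field F] [Fintype F] (m : ℕ) (hm : Odd m)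
    (hcard : Fintype.card F = 2 ^ (2 * m)) (K : Subfield F) [Fintype K]
    (hK : Fintype.card K = 2 ^ m) (α : F) (hα : α ^ 2 + α + 1 = 0)
    (χ : MulChar F ℂ) (hχ3 : χ ^ 3 = 1) (hχ : χ ≠ 1) :
    ∑ z : K, χ ((z : F) + α) = -1 := by
  classical
  -- arithmetic: 2^m - 1 = 3*t + 1 for odd m
  obtain ⟨k, hk⟩ := hm
  have h4k : 4 ^ k % 3 = 1 := by
    have : (4:ℕ) ^ k ≡ 1 ^ k [MOD 3] := Nat.ModEq.pow k (by decide)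
    simpa [Nat.ModEq] using this
  have h2m : 2 ^ m = 2 * 4 ^ k := by
    subst hk; rw [pow_succ, pow_mul]; ring
  have h2m2 : 2 ≤ 2 ^ m := by
    have : (1:ℕ) ≤ 4 ^ k := Nat.one_le_pow _ _ (by norm_num)
    omega
  obtain ⟨t, ht⟩ : ∃ t, 2 ^ m - 1 = 3 * t + 1 := ⟨(4 ^ k - 1) * 2 / 3, by omega⟩
  -- α properties
  have hα3 : α ^ 3 = 1 := by linear_combination (α - 1) * hα
  have hα0 : α ≠ 0 := by rintro rfl; simp at hα
  -- elements of K raised to 2^m - 1 are 1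
  have hKpow : ∀ u : K, u ≠ 0 → (u : F) ^ (2 ^ m - 1) = 1 := by
    intro u hu
    have h := FiniteField.pow_card_sub_one_eq_one u hu
    rw [hK] at h
    have h2 := congrArg (Subfield.subtype K) h
    push_cast at h2
    simpa using h2
  -- α ∉ K
  have hαK : ∀ u : K, (u : F) ≠ α := by
    intro u hu
    have hu0 : u ≠ 0 := by rintro rfl; exact hα0 hu.symm
    have h1 : α ^ (2 ^ m - 1) = 1 := hu ▸ hKpow u hu0
    have hα1 : α = 1 := by
      calc α = (α ^ 3) ^ t * α := by rw [hα3]; ring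
        _ = α ^ (2 ^ m - 1) := by rw [ht]; ring
        _ = 1 := h1
    have h3F : (3 : F) = 0 := by rw [hα1] at hα; linear_combination hα
    have hc2 : ((2 ^ (2 * m) : ℕ) : F) = 0 := by
      rw [← hcard]; exact FiniteField.cast_card_eq_zero F
    have hr3 : ringChar F ∣ 3 := ringChar.dvd (by exact_mod_cast h3F)
    have hr2 : ringChar F ∣ 2 ^ (2 * m) := ringChar.dvd (by exact_mod_cast hc2)
    have hprime : (ringChar F).Prime := CharP.char_is_prime F (ringChar F)
    have hd2 : ringChar F ∣ 2 := hprime.dvd_of_dvd_pow hr2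
    have : ringChar F ∣ 1 := by simpa using Nat.dvd_gcd hd2 hr3
    exact hprime.ne_one (Nat.dvd_one.mp this)
  -- χ is trivial on K \ {0}
  have hχK : ∀ u : K, u ≠ 0 → χ (u : F) = 1 := by
    intro u hu
    have hu0 : (u : F) ≠ 0 := fun h => hu (by ext; simpa using h)
    have h3 : χ (u : F) ^ 3 = 1 := by
      rw [← χ.pow_apply' (by norm_num : (3:ℕ) ≠ 0), hχ3]
      exact MulChar.one_apply (isUnit_iff_ne_zero.mpr hu0)
    have hq : χ (u : F) ^ (2 ^ m - 1) = 1 := by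
      rw [← map_pow, hKpow u hu, map_one]
    calc χ (u : F) = (χ (u : F) ^ 3) ^ t * χ (u : F) := by rw [h3]; ring
      _ = χ (u : F) ^ (2 ^ m - 1) := by rw [ht]; ring
      _ = 1 := hq
  have hχ0 : χ 0 = 0 := χ.map_zero
  -- the bijection K × K → F, (w, c) ↦ w + c * α
  have hbij : Function.Bijective (fun p : K × K => (p.1 : F) + (p.2 : F) * α) := by
    rw [Fintype.bijective_iff_injective_and_card]
    constructor
    · rintro ⟨w, c⟩ ⟨w', c'⟩ h
      simp only at h
      by_cases hcc : c = c'
      · subst hcc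
        have : (w : F) = w' := add_right_cancel h
        exact Prod.ext (Subtype.ext this) rfl
      · exfalso
        have hne : ((c' : F) - c) ≠ 0 :=
          sub_ne_zero_of_ne (fun h' => hcc (Subtype.ext h'.symm))
        have hαeq : α = ((w : F) - w') / ((c' : F) - c) := by
          rw [eq_div_iff hne]
          linear_combination -h
        apply hαK ((w - w') / (c' - c))
        rw [hαeq]
        push_cast
        rfl
    · rw [Fintype.card_prod, hK, hcard, two_mul, pow_add]
  have hsum0 : ∑ p : K × K, χ ((p.1 : F) + (p.2 : F) * α) = 0 := by
    rw [Fintype.sum_bijective _ hbij _ (fun x => χ x) (fun p => rfl)]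
    exact MulChar.sum_eq_zero_of_ne_one hχ
  rw [Fintype.sum_prod_type_right] at hsum0
  set S := ∑ z : K, χ ((z : F) + α) with hS
  -- inner sums
  have hinner : ∀ c : K, ∑ w : K, χ ((w : F) + (c : F) * α)
      = if c = 0 then (2 ^ m : ℂ) - 1 else S := by
    intro c
    by_cases hc : c = 0
    · subst hc
      simp only [if_pos rfl]
      have hterm : ∀ w : K, χ ((w : F) + ((0:K) : F) * α) = if w = 0 then 0 else 1 := by
        intro w
        by_cases hw : w = 0 <;> simp [hw, hχ0, hχK w]
      rw [Finset.sum_congr rfl (fun w _ => hterm w), Finset.sum_ite,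
        Finset.sum_const, Finset.sum_const, Finset.filter_eq', Finset.filter_ne']
      simp [Finset.card_erase_of_mem, hK]
    · rw [if_neg hc]
      rw [← Fintype.sum_bijective (fun z : K => c * z)
        (mulLeft_bijective₀ c hc) _ (fun w => χ ((w : F) + (c : F) * α)) (fun z => rfl)]
      refine Finset.sum_congr rfl fun z _ => ?_
      push_cast
      rw [← mul_add, map_mul, hχK c hc, one_mul]
  rw [Finset.sum_congr rfl (fun c _ => hinner c), Finset.sum_ite, Finset.sum_const,
    Finset.sum_const, Finset.filter_eq', Finset.filter_ne'] at hsum0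
  simp only [Finset.mem_univ, if_pos, Finset.card_singleton, one_smul,
    Finset.card_erase_of_mem, Finset.card_univ, hK] at hsum0
  have hcast : ((2 ^ m - 1 : ℕ) : ℂ) = (2 ^ m : ℂ) - 1 := by
    push_cast [Nat.cast_sub (by omega : 1 ≤ 2 ^ m)]; ring
  rw [nsmul_eq_mul, hcast] at hsum0
  have hne : (2 ^ m : ℂ) - 1 ≠ 0 := by
    rw [← hcast]
    exact_mod_cast (by omega : (2 ^ m - 1 : ℕ) ≠ 0)
  have : ((2 ^ m : ℂ) - 1) * (1 + S) = 0 := by linear_combination hsum0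
  rcases mul_eq_zero.mp this with h | h
  · exact absurd h hne
  · linear_combination h
end

section
/- If m is odd and χ is a multiplicative character of order 3 of F_{2^{2m}} (with χ(0) = 0), then the Gauss sum G(χ) = Σ_{y ∈ F_{2^{2m}}} χ(y) (-1)^{Tr(y)} equals 2^m. -/
section Aux

variable {F : Type*} [Field F] [Fintype F] [DecidableEq F]

lemma charTwo_of_card {m : ℕ} (hcard : Fintype.card F = 2 ^ (2 * m)) (hm : m ≠ 0) :
    CharP F 2 := by
  obtain ⟨n, hp, hc⟩ := FiniteField.card F (ringChar F)
  have h2 : ringChar F = 2 := by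
    have hdvd : ringChar F ∣ 2 ^ (2 * m) := by
      rw [← hcard, hc]
      exact dvd_pow_self _ n.pos.ne'
    have := (Nat.Prime.dvd_of_dvd_pow hp hdvd)
    exact (Nat.prime_dvd_prime_iff_eq hp Nat.prime_two).mp this
  exact h2 ▸ ringChar.charP F

lemma fieldTrace_zero (s : ℕ) : fieldTrace s (0 : F) = 0 := by
  simp [fieldTrace, zero_pow (pow_ne_zero _ (two_ne_zero))]

lemma fieldTrace_add [CharP F 2] (s : ℕ) (x y : F) :
    fieldTrace s (x + y) = fieldTrace s x + fieldTrace s y := by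
  unfold fieldTrace
  rw [← Finset.sum_add_distrib]
  exact Finset.sum_congr rfl fun i _ => add_pow_char_pow (p := 2) (x := x) (y := y) i

lemma fieldTrace_map_sq [CharP F 2] {m : ℕ} (hm : m ≠ 0)
    (hcard : Fintype.card F = 2 ^ (2 * m)) (x : F) :
    fieldTrace (2 * m) (x ^ 2) = fieldTrace (2 * m) x := by
  obtain ⟨s, hs⟩ : ∃ s, 2 * m = s + 1 := ⟨2 * m - 1, by omega⟩
  have hx : x ^ 2 ^ (2 * m) = x := by
    rw [← hcard]; exact FiniteField.pow_card x
  rw [hs] at hx ⊢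
  unfold fieldTrace
  rw [Finset.sum_range_succ, Finset.sum_range_succ']
  have h1 : ∀ i, (x ^ 2) ^ 2 ^ i = x ^ 2 ^ (i + 1) := by
    intro i; rw [← pow_mul, pow_succ, mul_comm (2^i) 2, pow_mul]
  rw [h1 s, hx]
  simp only [pow_zero, pow_one]
  exact congrArg (· + x) (Finset.sum_congr rfl fun i _ => h1 i)

lemma fieldTrace_sq [CharP F 2] {m : ℕ} (hm : m ≠ 0)
    (hcard : Fintype.card F = 2 ^ (2 * m)) (x : F) :
    fieldTrace (2 * m) x ^ 2 = fieldTrace (2 * m) x := by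
  have : fieldTrace (2 * m) x ^ 2 = fieldTrace (2 * m) (x ^ 2) := by
    unfold fieldTrace
    rw [sum_pow_char]
    exact Finset.sum_congr rfl fun i _ => by
      rw [← pow_mul, ← pow_mul, mul_comm]
  rw [this, fieldTrace_map_sq hm hcard]

lemma fieldTrace_mem [CharP F 2] {m : ℕ} (hm : m ≠ 0)
    (hcard : Fintype.card F = 2 ^ (2 * m)) (x : F) :
    fieldTrace (2 * m) x = 0 ∨ fieldTrace (2 * m) x = 1 := by
  have h := fieldTrace_sq hm hcard x
  have : fieldTrace (2 * m) x * (fieldTrace (2 * m) x - 1) = 0 := by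
    rw [mul_sub, mul_one, ← sq, h, sub_self]
  rcases mul_eq_zero.mp this with h' | h'
  · exact Or.inl h'
  · exact Or.inr (sub_eq_zero.mp h')

lemma fieldTrace_exists_ne_zero {m : ℕ} (hm : m ≠ 0)
    (hcard : Fintype.card F = 2 ^ (2 * m)) :
    ∃ x : F, fieldTrace (2 * m) x ≠ 0 := by
  by_contra h
  push_neg at h
  set P : Polynomial F := ∑ i ∈ Finset.range (2 * m), Polynomial.X ^ (2 ^ i) with hP
  have heval : ∀ x : F, P.eval x = 0 := by
    intro x
    rw [hP]
    simpa [Polynomial.eval_finset_sum, fieldTrace] using h x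
  have hdeg : P.natDegree < Fintype.card F := by
    have : P.natDegree ≤ 2 ^ (2 * m - 1) := by
      refine Polynomial.natDegree_sum_le_of_forall_le _ _ fun i hi => ?_
      rw [Polynomial.natDegree_X_pow]
      exact Nat.pow_le_pow_right (by norm_num) (by
        simp only [Finset.mem_range] at hi; omega)
    calc P.natDegree ≤ 2 ^ (2 * m - 1) := this
      _ < 2 ^ (2 * m) := Nat.pow_lt_pow_right (by norm_num) (by omega)
      _ = Fintype.card F := hcard.symm
  have hP0 : P = 0 :=
    Polynomial.eq_zero_of_natDegree_lt_card_of_eval_eq_zero P Function.injective_id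
      (fun x => heval x) (by simpa using hdeg)
  have hcoeff : P.coeff 1 = 1 := by
    rw [hP, Polynomial.finset_sum_coeff]
    rw [Finset.sum_eq_single 0]
    · simp
    · intro i hi hne
      rw [Polynomial.coeff_X_pow]
      simp only [ite_eq_right_iff]
      intro hh
      have : 1 < 2 ^ i := Nat.one_lt_two_pow_iff.mpr hne
      omega
    · intro h0
      simp at h0
      omega
  rw [hP0] at hcoeff
  simp at hcoeff

end Aux

open Finset in
theorem gauss_sum_cubic_odd_m {F : Type*} [Field F] [Fintype F] [DecidableEq F]
    (m : ℕ) (hm : Odd m) (hcard : Fintype.card F = 2 ^ (2 * m))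
    (χ : MulChar F ℂ) (hχ3 : χ ^ 3 = 1) (hχ : χ ≠ 1) :
    ∑ y : F, χ y * (if fieldTrace (2 * m) y = 0 then (1 : ℂ) else -1) = 2 ^ m := by
  have hm0 : m ≠ 0 := by rintro rfl; simp [Nat.odd_iff] at hm
  haveI : CharP F 2 := charTwo_of_card hcard hm0
  -- the additive character
  let ψ : AddChar F ℂ :=
    { toFun := fun y => if fieldTrace (2 * m) y = 0 then (1 : ℂ) else -1
      map_zero_eq_one' := by simp [fieldTrace_zero]
      map_add_eq_mul' := by
        intro a b
        rcases fieldTrace_mem hm0 hcard a with ha | ha <;>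
          rcases fieldTrace_mem hm0 hcard b with hb | hb <;>
          simp [fieldTrace_add, ha, hb, CharTwo.add_self_eq_zero, one_ne_zero] }
  have hψ_apply : ∀ y : F, ψ y = if fieldTrace (2 * m) y = 0 then (1 : ℂ) else -1 :=
    fun y => rfl
  have hGoal : (∑ y : F, χ y * (if fieldTrace (2 * m) y = 0 then (1 : ℂ) else -1))
      = gaussSum χ ψ :=
    Finset.sum_congr rfl fun y _ => by rw [hψ_apply]
  -- basic properties of ψ
  have hψne : ψ ≠ 1 := by
    obtain ⟨x, hx⟩ := fieldTrace_exists_ne_zero hm0 hcard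
    refine AddChar.ne_one_iff.mpr ⟨x, ?_⟩
    rw [hψ_apply, if_neg hx]
    norm_num
  have hψprim : ψ.IsPrimitive := AddChar.IsPrimitive.of_ne_one hψne
  have hψinv : ψ⁻¹ = ψ := DFunLike.ext _ _ fun a => by
    rw [AddChar.inv_apply, CharTwo.neg_eq]
  have hψsq : ∀ y : F, ψ (y ^ 2) = ψ y := fun y => by
    rw [hψ_apply, hψ_apply, fieldTrace_map_sq hm0 hcard]
  have hψreal : ∀ y : F, (starRingEnd ℂ) (ψ y) = ψ y := fun y => by
    rw [hψ_apply]; split_ifs <;> simp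
  -- conjugation of cube roots of unity
  have hconj_cube : ∀ u : ℂ, u ^ 3 = 1 → (starRingEnd ℂ) u = u ^ 2 := by
    intro u hu
    have hu0 : u ≠ 0 := by rintro rfl; simp at hu
    have h3 : ‖u‖ ^ 3 = 1 := by rw [← norm_pow, hu, norm_one]
    have hnorm : ‖u‖ = 1 := by
      have h1 : (‖u‖ - 1) * (‖u‖ ^ 2 + ‖u‖ + 1) = 0 := by linear_combination h3
      have h2 : (0:ℝ) < ‖u‖ ^ 2 + ‖u‖ + 1 := by positivity
      rcases mul_eq_zero.mp h1 with h' | h'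
      · linarith [sub_eq_zero.mp h']
      · exact absurd h' (ne_of_gt h2)
    have hmul : u * (starRingEnd ℂ) u = 1 := by
      rw [Complex.mul_conj]
      norm_cast
      rw [Complex.normSq_eq_norm_sq, hnorm]; norm_num
    have hmul2 : u * u ^ 2 = 1 := by rw [← pow_succ']; exact hu
    exact mul_left_cancel₀ hu0 (by rw [hmul, hmul2])
  -- Frobenius is bijective
  have hfrob : Function.Bijective (fun x : F => x ^ 2) := by
    refine Finite.injective_iff_bijective.mp ?_
    intro a b hab
    exact frobenius_inj F 2 (by simpa [frobenius_def] using hab)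
  -- the Gauss sum of χ² equals that of χ
  have hG2 : ∑ y : F, (χ y) ^ 2 * ψ y = gaussSum χ ψ :=
    calc ∑ y : F, (χ y) ^ 2 * ψ y = ∑ y : F, χ (y ^ 2) * ψ (y ^ 2) :=
          Finset.sum_congr rfl fun y _ => by rw [map_pow, hψsq]
    _ = gaussSum χ ψ := Fintype.sum_bijective _ hfrob _ _ (fun y => rfl)
  -- χ⁻¹ = χ²
  have hχinv : χ⁻¹ = χ ^ 2 := by
    have h : χ * χ ^ 2 = 1 := by rw [← pow_succ']; exact hχ3
    exact inv_eq_of_mul_eq_one_right h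
  -- G * G = 2^(2m)
  have hGG : gaussSum χ ψ * gaussSum χ ψ = (2 : ℂ) ^ (2 * m) := by
    have h := gaussSum_mul_gaussSum_eq_card hχ hψprim
    rw [hψinv, hχinv] at h
    have h2 : gaussSum (χ ^ 2) ψ = gaussSum χ ψ := by
      rw [← hG2]
      exact Finset.sum_congr rfl fun y _ => by rw [MulChar.pow_apply' χ two_ne_zero y]
    rw [h2] at h
    rw [h, hcard]
    push_cast
    ring
  -- the cube root of unity ω
  obtain ⟨g, hg⟩ := MulChar.ne_one_iff.mp hχ
  set ω : ℂ := χ g with hωdef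
  have hω3 : ω ^ 3 = 1 := by
    rw [hωdef, ← MulChar.pow_apply' χ (by norm_num) (g : F), hχ3, MulChar.one_apply_coe]
  have hω0 : ω ≠ 0 := by rintro h; rw [h] at hω3; simp at hω3
  have hω1 : ω ≠ 1 := hg
  have quad : ω ^ 2 + ω + 1 = 0 := by
    have h : (ω - 1) * (ω ^ 2 + ω + 1) = 0 := by linear_combination hω3
    rcases mul_eq_zero.mp h with h' | h'
    · exact absurd (sub_eq_zero.mp h') hω1
    · exact h'
  have hω2ne1 : ω ^ 2 ≠ 1 := by
    intro h
    have h3 : ω ^ 3 = ω := by rw [pow_succ, h, one_mul]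
    rw [h3] at hω3
    exact hω1 hω3
  have hωne : ω ≠ ω ^ 2 := by
    intro h
    have h2 := hω3
    rw [pow_succ, ← h, ← sq] at h2
    exact hω2ne1 h2
  -- useful ne facts
  have n01 : (0 : ℂ) ≠ 1 := by norm_num
  have n0ω : (0 : ℂ) ≠ ω := Ne.symm hω0
  have n0ω2 : (0 : ℂ) ≠ ω ^ 2 := Ne.symm (pow_ne_zero 2 hω0)
  have n1ω : (1 : ℂ) ≠ ω := Ne.symm hω1
  have n1ω2 : (1 : ℂ) ≠ ω ^ 2 := Ne.symm hω2ne1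
  -- classification of values of χ
  have hclass : ∀ y : F, χ y = 0 ∨ χ y = 1 ∨ χ y = ω ∨ χ y = ω ^ 2 := by
    intro y
    by_cases hy : IsUnit y
    · right
      have hcube : (χ y) ^ 3 = 1 := by
        rw [← MulChar.pow_apply' χ (by norm_num) y, hχ3, MulChar.one_apply hy]
      have h : (χ y - 1) * ((χ y - ω) * (χ y - ω ^ 2)) = 0 := by
        linear_combination hcube + (χ y - (χ y) ^ 2) * quad + (χ y - 1) * hω3
      rcases mul_eq_zero.mp h with h' | h'
      · exact Or.inl (sub_eq_zero.mp h')
      · rcases mul_eq_zero.mp h' with h'' | h''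
        · exact Or.inr (Or.inl (sub_eq_zero.mp h''))
        · exact Or.inr (Or.inr (sub_eq_zero.mp h''))
    · exact Or.inl (χ.map_nonunit hy)
  -- the three partial sums
  set A : ℂ := ∑ y ∈ Finset.univ.filter (fun y : F => χ y = 1), ψ y with hAdef
  set B : ℂ := ∑ y ∈ Finset.univ.filter (fun y : F => χ y = ω), ψ y with hBdef
  set C : ℂ := ∑ y ∈ Finset.univ.filter (fun y : F => χ y = ω ^ 2), ψ y with hCdef
  set b : ℤ := ∑ y ∈ Finset.univ.filter (fun y : F => χ y = ω),
      (if fieldTrace (2 * m) y = 0 then (1 : ℤ) else -1) with hbdef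
  have hBb : B = (b : ℂ) := by
    rw [hBdef, hbdef, Int.cast_sum]
    refine Finset.sum_congr rfl fun y _ => ?_
    rw [hψ_apply]
    split_ifs <;> simp
  -- split of the Gauss sum
  have hsplitG : gaussSum χ ψ = A + ω * B + ω ^ 2 * C := by
    have hpt : ∀ y : F, χ y * ψ y = (if χ y = 1 then ψ y else 0)
        + (ω * if χ y = ω then ψ y else 0) + (ω ^ 2 * if χ y = ω ^ 2 then ψ y else 0) := by
      intro y
      rcases hclass y with h | h | h | h
      · simp [h, n01, n0ω, n0ω2]
      · simp [h, n1ω, n1ω2]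
      · simp [h, Ne.symm n1ω, hωne]
      · simp [h, Ne.symm n1ω2, Ne.symm hωne]
    rw [gaussSum]
    calc ∑ y : F, χ y * ψ y
        = ∑ y : F, ((if χ y = 1 then ψ y else 0)
          + (ω * if χ y = ω then ψ y else 0) + (ω ^ 2 * if χ y = ω ^ 2 then ψ y else 0)) :=
          Finset.sum_congr rfl fun y _ => hpt y
      _ = A + ω * B + ω ^ 2 * C := by
          rw [Finset.sum_add_distrib, Finset.sum_add_distrib, ← Finset.mul_sum, ← Finset.mul_sum,
            hAdef, hBdef, hCdef, Finset.sum_filter, Finset.sum_filter, Finset.sum_filter]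
  -- sum of ψ over F is zero
  have hsum0 : A + B + C = -1 := by
    have hψ0 : ψ ≠ (0 : AddChar F ℂ) := hψne
    have hzero : ∑ y : F, ψ y = 0 := AddChar.sum_eq_zero_iff_ne_zero.mpr hψ0
    have hpt : ∀ y : F, ψ y = (if y = 0 then ψ y else 0) + ((if χ y = 1 then ψ y else 0)
        + (if χ y = ω then ψ y else 0) + (if χ y = ω ^ 2 then ψ y else 0)) := by
      intro y
      by_cases hy : y = 0
      · subst hy
        rw [MulChar.map_zero]
        simp [n01, n0ω, n0ω2]
      · have hyu : IsUnit y := isUnit_iff_ne_zero.mpr hy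
        have hcube : (χ y) ^ 3 = 1 := by
          rw [← MulChar.pow_apply' χ (by norm_num) y, hχ3, MulChar.one_apply hyu]
        have hy0 : χ y ≠ 0 := by
          intro h; rw [h] at hcube; simp at hcube
        rcases hclass y with h | h | h | h
        · exact absurd h hy0
        · simp [h, hy, n1ω, n1ω2]
        · simp [h, hy, Ne.symm n1ω, hωne]
        · simp [h, hy, Ne.symm n1ω2, Ne.symm hωne]
    have := calc (0:ℂ) = ∑ y : F, ψ y := hzero.symm
      _ = ∑ y : F, ((if y = 0 then ψ y else 0) + ((if χ y = 1 then ψ y else 0)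
          + (if χ y = ω then ψ y else 0) + (if χ y = ω ^ 2 then ψ y else 0))) :=
          Finset.sum_congr rfl fun y _ => hpt y
      _ = (∑ y ∈ Finset.univ.filter (fun y : F => y = 0), ψ y) + (A + B + C) := by
          rw [Finset.sum_add_distrib, Finset.sum_add_distrib, Finset.sum_add_distrib,
            hAdef, hBdef, hCdef, Finset.sum_filter, Finset.sum_filter, Finset.sum_filter,
            Finset.sum_filter]
      _ = 1 + (A + B + C) := by
          congr 1
          rw [Finset.filter_eq']
          simp [AddChar.map_zero_eq_one]
    linear_combination -this
  -- conjugation fixes the Gauss sum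
  have hconjG : (starRingEnd ℂ) (gaussSum χ ψ) = gaussSum χ ψ := by
    have h1 : (starRingEnd ℂ) (gaussSum χ ψ) = ∑ y : F, (χ y) ^ 2 * ψ y := by
      rw [gaussSum, map_sum]
      refine Finset.sum_congr rfl fun y _ => ?_
      rw [map_mul, hψreal]
      congr 1
      by_cases hy : IsUnit y
      · refine hconj_cube _ ?_
        rw [← MulChar.pow_apply' χ (by norm_num) y, hχ3, MulChar.one_apply hy]
      · rw [χ.map_nonunit hy]; simp
    rw [h1, hG2]
  -- conjugation facts for A, B, C, ω
  have hAreal : (starRingEnd ℂ) A = A := by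
    rw [hAdef, map_sum]; exact Finset.sum_congr rfl fun y _ => hψreal y
  have hBreal : (starRingEnd ℂ) B = B := by
    rw [hBdef, map_sum]; exact Finset.sum_congr rfl fun y _ => hψreal y
  have hCreal : (starRingEnd ℂ) C = C := by
    rw [hCdef, map_sum]; exact Finset.sum_congr rfl fun y _ => hψreal y
  have hcω : (starRingEnd ℂ) ω = ω ^ 2 := hconj_cube ω hω3
  have hcω2 : (starRingEnd ℂ) (ω ^ 2) = ω := by
    rw [map_pow, hcω]
    calc (ω ^ 2) ^ 2 = ω ^ 3 * ω := by ring
    _ = ω := by rw [hω3, one_mul]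
  -- B = C
  have hBC : B = C := by
    have h2 : gaussSum χ ψ = A + ω ^ 2 * B + ω * C := by
      conv_lhs => rw [← hconjG, hsplitG]
      rw [map_add, map_add, map_mul, map_mul, hAreal, hBreal, hCreal, hcω, hcω2]
    have h3 : (ω - ω ^ 2) * (B - C) = 0 := by linear_combination h2 - hsplitG
    rcases mul_eq_zero.mp h3 with h' | h'
    · exact absurd (sub_eq_zero.mp h') hωne
    · exact sub_eq_zero.mp h'
  -- the Gauss sum in terms of b
  have hGval : gaussSum χ ψ = -1 - 3 * (b : ℂ) := by
    rw [← hBb]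
    rw [hsplitG]
    linear_combination hsum0 + B * quad - (ω ^ 2 - 1) * hBC
  -- G = ±2^m
  have hpm : gaussSum χ ψ = 2 ^ m ∨ gaussSum χ ψ = -(2 ^ m) := by
    have hfac : (gaussSum χ ψ - 2 ^ m) * (gaussSum χ ψ + 2 ^ m) = 0 := by
      have h2m : ((2 : ℂ) ^ m) * ((2 : ℂ) ^ m) = (2 : ℂ) ^ (2 * m) := by
        rw [← pow_add]; ring_nf
      linear_combination hGG - h2m
    rcases mul_eq_zero.mp hfac with h' | h'
    · exact Or.inl (sub_eq_zero.mp h')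
    · exact Or.inr (by linear_combination h')
  rw [hGoal]
  rcases hpm with h | h
  · exact h
  · exfalso
    have hcast : (-(2 ^ m) : ℂ) = -1 - 3 * (b : ℂ) := by rw [← h, hGval]
    have hz : -((2 : ℤ) ^ m) = -1 - 3 * b := by exact_mod_cast hcast
    obtain ⟨k, hk⟩ := hm
    have h4 : (3 : ℤ) ∣ 4 ^ k - 1 := by
      simpa using sub_dvd_pow_sub_pow (4 : ℤ) 1 k
    obtain ⟨c, hc⟩ := h4
    have hpow : (2 : ℤ) ^ m = 2 * 4 ^ k := by
      subst hk
      rw [pow_succ, pow_mul]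
      norm_num
      ring
    have h4k : (4 : ℤ) ^ k = 3 * c + 1 := by linarith
    rw [hpow, h4k] at hz
    omega
end

section
/- For m even, let χ be a multiplicative character of F_{2^{2m}} of order 3 and χ' its restriction to F_{2^m} (both extended by 0 at 0). Then G_{2m}(χ) = A · G_m(χ'), where A = Σ_{z ∈ F_{2^m}} χ(z + α) for any α ∈ F_{2^{2m}} with α + α^{2^m} = 1, and G_s denotes the Gauss sum with additive character (-1)^{Tr_s(·)}. -/
theorem gauss_sum_even_m_factorization {F : Type*} [Field F] [Fintype F] [DecidableEq F]
    (m : ℕ) (hm : Even m) (hm1 : 1 ≤ m) (hcard : Fintype.card F = 2 ^ (2 * m))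
    (K : Subfield F) [Fintype K] (hK : Fintype.card K = 2 ^ m)
    (χ : MulChar F ℂ) (hχ3 : χ ^ 3 = 1) (hχ : χ ≠ 1)
    (α : F) (hα : α + α ^ (2 ^ m) = 1) :
    ∑ y : F, χ y * (if fieldTrace (2 * m) y = 0 then (1 : ℂ) else -1)
      = (∑ z : K, χ ((z : F) + α)) *
        ∑ z : K, χ (z : F) * (if fieldTrace m (z : F) = 0 then (1 : ℂ) else -1) := by
  classical
  -- characteristic 2
  have hchar : CharP F 2 := by
    obtain ⟨p, hp⟩ := CharP.exists F
    obtain ⟨n, hpp, hcard'⟩ := FiniteField.card F p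
    have hp2 : p = 2 := by
      have h1 : p ∣ 2 ^ (2 * m) := by
        rw [← hcard, hcard']
        exact dvd_pow_self p n.pos.ne'
      have h2 := hpp.dvd_of_dvd_pow h1
      exact (Nat.prime_dvd_prime_iff_eq hpp Nat.prime_two).mp h2
    rw [← hp2]; exact hp
  haveI := hchar
  haveI : Fact (Nat.Prime 2) := ⟨Nat.prime_two⟩
  have h2 : (2 : F) = 0 := by
    have := CharP.cast_eq_zero F 2
    exact_mod_cast this
  have hxx : ∀ x : F, x + x = 0 := fun x => by
    rw [← two_mul, h2, zero_mul]
  -- Frobenius facts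
  have hFq : ∀ x : F, (x ^ 2 ^ m) ^ 2 ^ m = x := fun x => by
    have h := FiniteField.pow_card x
    rw [hcard] at h
    rw [← pow_mul, ← pow_add, ← two_mul, h]
  have hKfix : ∀ z : K, (z : F) ^ 2 ^ m = (z : F) := fun z => by
    have h := FiniteField.pow_card z
    rw [hK] at h
    calc (z : F) ^ 2 ^ m = ((z ^ 2 ^ m : K) : F) := by push_cast; ring
    _ = (z : F) := by rw [h]
  -- α is not fixed by Frobenius
  have hone : (1 : F) ≠ 0 := one_ne_zero
  have hα2 : α ^ 2 ^ m = 1 + α := by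
    linear_combination hα - α * h2
  have hαK : α ∉ K := by
    intro hmem
    have h : α ^ 2 ^ m = α := hKfix ⟨α, hmem⟩
    rw [hα2] at h
    exact hone (by linear_combination h)
  -- membership criterion: x ^ 2^m = x → x ∈ K
  have hmem : ∀ x : F, x ^ 2 ^ m = x → x ∈ K := by
    intro x hx
    set p : Polynomial F := Polynomial.X ^ 2 ^ m - Polynomial.X with hpdef
    have hproots : ∀ y : F, y ^ 2 ^ m = y → y ∈ p.roots := by
      intro y hy
      rw [Polynomial.mem_roots']
      refine ⟨fun h0 => ?_, by simp [hpdef, Polynomial.IsRoot, hy]⟩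
      have := congrArg (Polynomial.eval α) h0
      simp [hpdef, hα2] at this
    -- the set S of solutions
    set S : Finset F := Finset.univ.filter (fun y => y ^ 2 ^ m = y) with hSdef
    set T : Finset F := Finset.univ.image (fun z : K => (z : F)) with hTdef
    have hTS : T ⊆ S := by
      intro y hy
      simp only [hTdef, Finset.mem_image] at hy
      obtain ⟨z, _, rfl⟩ := hy
      simp [hSdef, hKfix z]
    have hScard : S.card ≤ 2 ^ m := by
      have h1 : S.val ⊆ p.roots := by
        intro y hy
        have : y ∈ S := hy
        simp only [hSdef, Finset.mem_filter] at this
        exact hproots y this.2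
      have h2 := Polynomial.card_le_degree_of_subset_roots h1
      have h3 : p.natDegree ≤ 2 ^ m := by
        apply le_trans (Polynomial.natDegree_sub_le _ _)
        simp [Polynomial.natDegree_X_pow]
        exact Nat.one_le_two_pow
      omega
    have hTcard : T.card = 2 ^ m := by
      rw [hTdef, Finset.card_image_of_injective _ Subtype.coe_injective]
      simp [hK]
    have hST : T = S := Finset.eq_of_subset_of_card_le hTS (by omega)
    have hxS : x ∈ S := by simp [hSdef, hx]
    rw [← hST, hTdef] at hxS
    simp only [Finset.mem_image] at hxS
    obtain ⟨z, _, rfl⟩ := hxS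
    exact z.2
  -- 3 divides 2^m - 1
  have h3dvd : 3 ∣ 2 ^ m - 1 := by
    obtain ⟨t, rfl⟩ := hm
    have h4 : (4 : ℕ) ^ t ≡ 1 ^ t [MOD 3] := Nat.ModEq.pow t (by decide)
    have : 2 ^ (t + t) = 4 ^ t := by rw [show (4:ℕ) = 2^2 by norm_num, ← pow_mul]; ring_nf
    rw [this]
    simp only [one_pow] at h4
    exact (Nat.modEq_iff_dvd' (Nat.one_le_pow t 4 (by norm_num))).mp h4.symm
  obtain ⟨k, hk⟩ := h3dvd
  have hq1 : 2 ^ m + 1 = 3 * k + 2 := by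
    have : 1 ≤ 2 ^ m := Nat.one_le_two_pow
    omega
  have hchi0 : χ 0 = 0 := MulChar.map_nonunit χ (by simp)
  -- existence of w ∈ K with χ w ≠ 1
  have hw : ∃ w : K, (w : F) ≠ 0 ∧ χ (w : F) ≠ 1 := by
    by_contra hcon
    push_neg at hcon
    apply hχ
    apply MulChar.ext
    intro a
    rw [MulChar.one_apply_coe]
    have hx : (a : F) ≠ 0 := a.ne_zero
    have hxK : ((a : F) ^ (2 ^ m + 1)) ∈ K := by
      apply hmem
      have e1 : ((a : F) ^ (2 ^ m + 1)) ^ 2 ^ m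
          = ((a : F) ^ 2 ^ m) ^ 2 ^ m * (a : F) ^ 2 ^ m := by
        rw [pow_add, mul_pow, pow_one]
      rw [e1, hFq, pow_add, pow_one, mul_comm]
    have hval : χ ((a : F) ^ (2 ^ m + 1)) = 1 :=
      hcon ⟨_, hxK⟩ (pow_ne_zero _ hx)
    rw [map_pow] at hval
    have hc3 : χ (a : F) ^ 3 = 1 := by
      rw [← MulChar.pow_apply' χ (by norm_num) (a : F), hχ3,
        MulChar.one_apply (isUnit_iff_ne_zero.mpr hx)]
    have hc2 : χ (a : F) ^ 2 = 1 := by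
      rw [hq1, pow_add, pow_mul, hc3, one_pow, one_mul] at hval
      exact hval
    have := hc3
    rw [pow_succ, hc2, one_mul] at this
    exact this
  obtain ⟨w, hw0, hw1⟩ := hw
  -- the bijection K × K ≃ F, (v, u) ↦ u + v α
  have hbij : Function.Bijective (fun pr : K × K => ((pr.2 : F) + (pr.1 : F) * α)) := by
    rw [Fintype.bijective_iff_injective_and_card]
    constructor
    · rintro ⟨v, u⟩ ⟨v', u'⟩ hp
      simp only at hp
      have hv : v = v' := by
        by_contra hne
        have hvv' : ((v : F) - (v' : F)) ≠ 0 :=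
          sub_ne_zero.mpr (fun h => hne (Subtype.coe_injective h))
        have hαval : α = ((u' : F) - (u : F)) / ((v : F) - (v' : F)) := by
          rw [eq_div_iff hvv']
          linear_combination hp
        apply hαK
        rw [hαval]
        exact K.div_mem (K.sub_mem u'.2 u.2) (K.sub_mem v.2 v'.2)
      subst hv
      exact Prod.ext rfl (Subtype.coe_injective (add_right_cancel hp))
    · simp only [Fintype.card_prod, hK, hcard, ← pow_add, two_mul]
  -- trace computation
  have hsplit : ∀ y : F, fieldTrace (2 * m) y = fieldTrace m (y + y ^ 2 ^ m) := by
    intro y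
    unfold fieldTrace
    rw [two_mul, ← Finset.sum_range_add_sum_Ico (fun i => y ^ 2 ^ i) (Nat.le_add_right m m),
      Finset.sum_Ico_eq_sum_range]
    simp only [Nat.add_sub_cancel_left]
    rw [← Finset.sum_add_distrib]
    apply Finset.sum_congr rfl
    intro i _
    rw [add_pow_char_pow]
    congr 1
    rw [← pow_mul, ← pow_add]
  have htr : ∀ (u v : K), fieldTrace (2 * m) ((u : F) + (v : F) * α) = fieldTrace m (v : F) := by
    intro u v
    rw [hsplit]
    congr 1
    have h1 : ((u : F) + (v : F) * α) ^ 2 ^ m = (u : F) + (v : F) * α ^ 2 ^ m := by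
      rw [add_pow_char_pow, mul_pow, hKfix u, hKfix v]
    rw [h1, hα2]
    linear_combination ((u : F) + (v : F) * α) * h2
  -- inner sum
  have hinner : ∀ v : K, (∑ u : K, χ ((u : F) + (v : F) * α))
      = χ (v : F) * ∑ z : K, χ ((z : F) + α) := by
    intro v
    by_cases hv : (v : F) = 0
    · rw [hv, hchi0, zero_mul]
      simp only [zero_mul, add_zero]
      -- ∑ u, χ ↑u = 0
      set S := ∑ u : K, χ (u : F) with hSdef
      have hwK : w ≠ 0 := fun h => hw0 (by rw [h]; simp)
      have hmulS : χ (w : F) * S = S := by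
        rw [hSdef, Finset.mul_sum]
        apply Fintype.sum_bijective (fun u : K => w * u)
          (Equiv.mulLeft₀ w hwK).bijective
        intro u
        push_cast
        rw [map_mul]
      have : (χ (w : F) - 1) * S = 0 := by linear_combination hmulS
      rcases mul_eq_zero.mp this with h | h
      · exact absurd (by linear_combination h) hw1
      · exact h
    · have hvK : v ≠ 0 := fun h => hv (by rw [h]; simp)
      rw [Finset.mul_sum]
      symm
      apply Fintype.sum_bijective (fun z : K => v * z)
        (Equiv.mulLeft₀ v hvK).bijective
      intro z
      push_cast
      rw [show ((v : F) * (z : F) + (v : F) * α) = (v : F) * ((z : F) + α) by ring, map_mul]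
  -- main computation
  calc ∑ y : F, χ y * (if fieldTrace (2 * m) y = 0 then (1 : ℂ) else -1)
      = ∑ pr : K × K, χ ((pr.2 : F) + (pr.1 : F) * α) *
          (if fieldTrace (2 * m) ((pr.2 : F) + (pr.1 : F) * α) = 0 then (1 : ℂ) else -1) :=
        (Function.Bijective.sum_comp hbij _).symm
    _ = ∑ v : K, ∑ u : K, χ ((u : F) + (v : F) * α) *
          (if fieldTrace m (v : F) = 0 then (1 : ℂ) else -1) := by
        rw [Fintype.sum_prod_type]
        apply Finset.sum_congr rfl
        intro v _
        apply Finset.sum_congr rfl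
        intro u _
        rw [htr u v]
    _ = ∑ v : K, (χ (v : F) * ∑ z : K, χ ((z : F) + α)) *
          (if fieldTrace m (v : F) = 0 then (1 : ℂ) else -1) := by
        apply Finset.sum_congr rfl
        intro v _
        rw [← Finset.sum_mul, hinner v]
    _ = (∑ z : K, χ ((z : F) + α)) *
          ∑ z : K, χ (z : F) * (if fieldTrace m (z : F) = 0 then (1 : ℂ) else -1) := by
        rw [Finset.mul_sum]
        apply Finset.sum_congr rfl
        intro v _
        ring
end
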